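/- arXiv:2601.14201 — 2 statements merged into one kernel-verified Lean document; each statement's English description precedes it below -/
import Mathlib

section
/- Let W_f, W_η, W_p be invertible square matrices over ℝ (of possibly different sizes), and suppose T_p := W_p + Δt²·P_pᵀ·W_η⁻¹·P_p is invertible, where Δt is a real number and P_p is a matrix of appropriate dimensions. Consider the block linear system with unknowns (u, η, p, y): W_f·u − A_fᵀ·y = w₁; W_η·η − Δt²·P_p·p − Δt²·A₂ᵀ·y = w₂; P_pᵀ·η + W_p·p − Δt·A₃ᵀ·y = w₃; A₁·u + A₂·η + A₃·p + A₄·y = a. If (u, η, p, y) solves this system, then y satisfies S·y = b, where S = A₄ + A₁·W_f⁻¹·A_fᵀ + Δt²·A₂·W_η⁻¹·A₂ᵀ − (A₃ + Δt²·A₂·W_η⁻¹·P_p)·T_p⁻¹·(−Δt·A₃ᵀ + Δt²·P_pᵀ·W_η⁻¹·A₂ᵀ) and b = a − A₁·W_f⁻¹·w₁ − A₂·W_η⁻¹·w₂ − (A₃ + Δt²·A₂·W_η⁻¹·P_p)·T_p⁻¹·(w₃ − P_pᵀ·W_η⁻¹·w₂). -/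
open Matrix

lemma cancel_aux {k m : ℕ} (A : Matrix (Fin k) (Fin m) ℝ) (W : Matrix (Fin m) (Fin m) ℝ)
    (hW : IsUnit W) (v : Fin m → ℝ) :
    (A * W⁻¹).mulVec (W.mulVec v) = A.mulVec v := by
  rw [Matrix.mulVec_mulVec, Matrix.mul_assoc,
    Matrix.nonsing_inv_mul _ ((Matrix.isUnit_iff_isUnit_det W).mp hW), Matrix.mul_one]

theorem schur_complement_reduction
    {nf nη np ny : ℕ} (Δt : ℝ)
    (Wf : Matrix (Fin nf) (Fin nf) ℝ) (Wη : Matrix (Fin nη) (Fin nη) ℝ)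
    (Wp : Matrix (Fin np) (Fin np) ℝ)
    (Pp : Matrix (Fin nη) (Fin np) ℝ)
    (Af A₁ : Matrix (Fin ny) (Fin nf) ℝ) (A₂ : Matrix (Fin ny) (Fin nη) ℝ)
    (A₃ : Matrix (Fin ny) (Fin np) ℝ) (A₄ : Matrix (Fin ny) (Fin ny) ℝ)
    (hWf : IsUnit Wf) (hWη : IsUnit Wη) (hWp : IsUnit Wp)
    (Tp : Matrix (Fin np) (Fin np) ℝ)
    (hTp : Tp = Wp + Δt^2 • (Ppᵀ * Wη⁻¹ * Pp)) (hTpUnit : IsUnit Tp)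
    (u : Fin nf → ℝ) (η : Fin nη → ℝ) (p : Fin np → ℝ) (y : Fin ny → ℝ)
    (w₁ : Fin nf → ℝ) (w₂ : Fin nη → ℝ) (w₃ : Fin np → ℝ) (a : Fin ny → ℝ)
    (h1 : Wf.mulVec u - Afᵀ.mulVec y = w₁)
    (h2 : Wη.mulVec η - Δt^2 • Pp.mulVec p - Δt^2 • A₂ᵀ.mulVec y = w₂)
    (h3 : Ppᵀ.mulVec η + Wp.mulVec p - Δt • A₃ᵀ.mulVec y = w₃)
    (h4 : A₁.mulVec u + A₂.mulVec η + A₃.mulVec p + A₄.mulVec y = a)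
    (S : Matrix (Fin ny) (Fin ny) ℝ)
    (hS : S = A₄ + A₁ * Wf⁻¹ * Afᵀ + Δt^2 • (A₂ * Wη⁻¹ * A₂ᵀ)
        - (A₃ + Δt^2 • (A₂ * Wη⁻¹ * Pp)) * Tp⁻¹
            * ((-Δt) • A₃ᵀ + Δt^2 • (Ppᵀ * Wη⁻¹ * A₂ᵀ)))
    (b : Fin ny → ℝ)
    (hb : b = a - (A₁ * Wf⁻¹).mulVec w₁ - (A₂ * Wη⁻¹).mulVec w₂
        - ((A₃ + Δt^2 • (A₂ * Wη⁻¹ * Pp)) * Tp⁻¹).mulVec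
            (w₃ - (Ppᵀ * Wη⁻¹).mulVec w₂)) :
    S.mulVec y = b := by
  have eq1 : Wf.mulVec u = w₁ + Afᵀ.mulVec y := sub_eq_iff_eq_add.mp h1
  have eq2 : Wη.mulVec η = (w₂ + Δt^2 • A₂ᵀ.mulVec y) + Δt^2 • Pp.mulVec p :=
    sub_eq_iff_eq_add.mp (sub_eq_iff_eq_add.mp h2)
  have E1 : A₁.mulVec u = (A₁ * Wf⁻¹).mulVec ((w₁ + Afᵀ.mulVec y)) :=
    (cancel_aux A₁ Wf hWf u).symm.trans (congrArg _ eq1)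
  have E2 : A₂.mulVec η
      = (A₂ * Wη⁻¹).mulVec ((w₂ + Δt^2 • A₂ᵀ.mulVec y) + Δt^2 • Pp.mulVec p) :=
    (cancel_aux A₂ Wη hWη η).symm.trans (congrArg _ eq2)
  have E2' : Ppᵀ.mulVec η
      = (Ppᵀ * Wη⁻¹).mulVec ((w₂ + Δt^2 • A₂ᵀ.mulVec y) + Δt^2 • Pp.mulVec p) :=
    (cancel_aux Ppᵀ Wη hWη η).symm.trans (congrArg _ eq2)
  have e3 : Tp.mulVec p = (w₃ - (Ppᵀ * Wη⁻¹).mulVec w₂)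
      - ((-Δt) • A₃ᵀ + Δt^2 • (Ppᵀ * Wη⁻¹ * A₂ᵀ)).mulVec y := by
    rw [hTp]
    funext i
    have hh := congrFun h3 i
    have he := congrFun E2' i
    simp only [Matrix.add_mulVec, Matrix.sub_mulVec, Matrix.smul_mulVec,
      Matrix.mulVec_add, Matrix.mulVec_sub, Matrix.mulVec_smul, ← Matrix.mulVec_mulVec,
      Matrix.neg_mulVec, Pi.add_apply, Pi.sub_apply, Pi.smul_apply, Pi.neg_apply,
      smul_eq_mul, neg_smul] at *
    linear_combination hh - he
  have EM : (A₃ + Δt^2 • (A₂ * Wη⁻¹ * Pp)).mulVec p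
      = ((A₃ + Δt^2 • (A₂ * Wη⁻¹ * Pp)) * Tp⁻¹).mulVec
          ((w₃ - (Ppᵀ * Wη⁻¹).mulVec w₂)
            - ((-Δt) • A₃ᵀ + Δt^2 • (Ppᵀ * Wη⁻¹ * A₂ᵀ)).mulVec y) :=
    (cancel_aux _ Tp hTpUnit p).symm.trans (congrArg _ e3)
  subst hS hb
  funext i
  have h4i := congrFun h4 i
  have E1i := congrFun E1 i
  have E2i := congrFun E2 i
  have EMi := congrFun EM i
  simp only [Matrix.add_mulVec, Matrix.sub_mulVec, Matrix.smul_mulVec,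
    Matrix.mulVec_add, Matrix.mulVec_sub, Matrix.mulVec_smul, ← Matrix.mulVec_mulVec,
    Matrix.neg_mulVec, Pi.add_apply, Pi.sub_apply, Pi.smul_apply, Pi.neg_apply,
    smul_eq_mul, neg_smul] at *
  linear_combination h4i - E1i - E2i - EMi
end

section
/- With the notation of the Schur complement reduction, if additionally S is invertible, then given y = S⁻¹·b, the remaining unknowns are recovered by u = W_f⁻¹·(w₁ + A_fᵀ·y), p = T_p⁻¹·(w₃ + Δt·A₃ᵀ·y − P_pᵀ·W_η⁻¹·(w₂ + Δt²·A₂ᵀ·y)), and η = W_η⁻¹·(w₂ + Δt²·P_p·p + Δt²·A₂ᵀ·y), and the resulting tuple (u, η, p, y) solves the original block system. -/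
open Matrix

theorem schur_complement_recovery
    {nf nη np ny : ℕ} (Δt : ℝ)
    (Wf : Matrix (Fin nf) (Fin nf) ℝ) (Wη : Matrix (Fin nη) (Fin nη) ℝ)
    (Wp : Matrix (Fin np) (Fin np) ℝ)
    (Pp : Matrix (Fin nη) (Fin np) ℝ)
    (Af A₁ : Matrix (Fin ny) (Fin nf) ℝ) (A₂ : Matrix (Fin ny) (Fin nη) ℝ)
    (A₃ : Matrix (Fin ny) (Fin np) ℝ) (A₄ : Matrix (Fin ny) (Fin ny) ℝ)
    (hWf : IsUnit Wf) (hWη : IsUnit Wη) (hWp : IsUnit Wp)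
    (Tp : Matrix (Fin np) (Fin np) ℝ)
    (hTp : Tp = Wp + Δt^2 • (Ppᵀ * Wη⁻¹ * Pp)) (hTpUnit : IsUnit Tp)
    (S : Matrix (Fin ny) (Fin ny) ℝ)
    (hS : S = A₄ + A₁ * Wf⁻¹ * Afᵀ + Δt^2 • (A₂ * Wη⁻¹ * A₂ᵀ)
        - (A₃ + Δt^2 • (A₂ * Wη⁻¹ * Pp)) * Tp⁻¹
            * ((-Δt) • A₃ᵀ + Δt^2 • (Ppᵀ * Wη⁻¹ * A₂ᵀ)))
    (hSUnit : IsUnit S)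
    (w₁ : Fin nf → ℝ) (w₂ : Fin nη → ℝ) (w₃ : Fin np → ℝ) (a : Fin ny → ℝ)
    (b : Fin ny → ℝ)
    (hb : b = a - (A₁ * Wf⁻¹).mulVec w₁ - (A₂ * Wη⁻¹).mulVec w₂
        - ((A₃ + Δt^2 • (A₂ * Wη⁻¹ * Pp)) * Tp⁻¹).mulVec
            (w₃ - (Ppᵀ * Wη⁻¹).mulVec w₂))
    (y : Fin ny → ℝ) (hy : y = S⁻¹.mulVec b)
    (u : Fin nf → ℝ) (hu : u = Wf⁻¹.mulVec (w₁ + Afᵀ.mulVec y))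
    (p : Fin np → ℝ)
    (hp : p = Tp⁻¹.mulVec (w₃ + Δt • A₃ᵀ.mulVec y
        - (Ppᵀ * Wη⁻¹).mulVec (w₂ + Δt^2 • A₂ᵀ.mulVec y)))
    (η : Fin nη → ℝ)
    (hη : η = Wη⁻¹.mulVec (w₂ + Δt^2 • Pp.mulVec p + Δt^2 • A₂ᵀ.mulVec y)) :
    Wf.mulVec u - Afᵀ.mulVec y = w₁ ∧
    Wη.mulVec η - Δt^2 • Pp.mulVec p - Δt^2 • A₂ᵀ.mulVec y = w₂ ∧
    Ppᵀ.mulVec η + Wp.mulVec p - Δt • A₃ᵀ.mulVec y = w₃ ∧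
    A₁.mulVec u + A₂.mulVec η + A₃.mulVec p + A₄.mulVec y = a := by
  have hWf' := Matrix.mul_nonsing_inv Wf ((Matrix.isUnit_iff_isUnit_det Wf).mp hWf)
  have hWη' := Matrix.mul_nonsing_inv Wη ((Matrix.isUnit_iff_isUnit_det Wη).mp hWη)
  have hTp' := Matrix.mul_nonsing_inv Tp ((Matrix.isUnit_iff_isUnit_det Tp).mp hTpUnit)
  have hS' := Matrix.mul_nonsing_inv S ((Matrix.isUnit_iff_isUnit_det S).mp hSUnit)
  -- basic cancellation lemmas on vectors
  have cWf : ∀ v, Wf.mulVec (Wf⁻¹.mulVec v) = v := by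
    intro v; rw [Matrix.mulVec_mulVec, hWf', Matrix.one_mulVec]
  have cWη : ∀ v, Wη.mulVec (Wη⁻¹.mulVec v) = v := by
    intro v; rw [Matrix.mulVec_mulVec, hWη', Matrix.one_mulVec]
  have cTp : ∀ v, Tp.mulVec (Tp⁻¹.mulVec v) = v := by
    intro v; rw [Matrix.mulVec_mulVec, hTp', Matrix.one_mulVec]
  have h1 : Wf.mulVec u = w₁ + Afᵀ.mulVec y := by rw [hu, cWf]
  have h2 : Wη.mulVec η = w₂ + Δt^2 • Pp.mulVec p + Δt^2 • A₂ᵀ.mulVec y := by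
    rw [hη, cWη]
  have h3 : Tp.mulVec p = w₃ + Δt • A₃ᵀ.mulVec y
      - (Ppᵀ * Wη⁻¹).mulVec (w₂ + Δt^2 • A₂ᵀ.mulVec y) := by rw [hp, cTp]
  have hSy : S.mulVec y = b := by
    rw [hy, Matrix.mulVec_mulVec, hS', Matrix.one_mulVec]
  refine ⟨by rw [h1]; abel, by rw [h2]; abel, ?_, ?_⟩
  · -- third equation
    have h3' := h3
    rw [hTp, Matrix.add_mulVec, Matrix.smul_mulVec] at h3'
    have hPη : Ppᵀ.mulVec η = (Ppᵀ * Wη⁻¹).mulVec (w₂ + Δt^2 • Pp.mulVec p + Δt^2 • A₂ᵀ.mulVec y) := by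
      rw [hη, Matrix.mulVec_mulVec]
    rw [hPη]
    simp only [Matrix.mulVec_add, Matrix.mulVec_sub, Matrix.mulVec_smul,
      Matrix.mulVec_mulVec, Matrix.mul_assoc] at h3' ⊢
    have := h3'
    linear_combination (norm := module) this
  · -- fourth equation
    have ha : a = S.mulVec y + (A₁ * Wf⁻¹).mulVec w₁ + (A₂ * Wη⁻¹).mulVec w₂
        + ((A₃ + Δt^2 • (A₂ * Wη⁻¹ * Pp)) * Tp⁻¹).mulVec
            (w₃ - (Ppᵀ * Wη⁻¹).mulVec w₂) := by
      rw [hSy, hb]; abel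
    rw [ha, hS, hu, hη, hp]
    simp only [Matrix.mulVec_add, Matrix.mulVec_sub, Matrix.mulVec_smul,
      Matrix.add_mulVec, Matrix.sub_mulVec, Matrix.smul_mulVec,
      neg_smul, Matrix.neg_mulVec, Matrix.mulVec_neg, ← Matrix.mulVec_mulVec]
    module
end
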